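/- Let $q=2^r$ and let $n\geq 1$ be an odd integer, with $(n,q)\neq(1,4)$. Then the $\mathbb{F}_2$-linear map $\mathbb{F}_q\to\mathbb{F}_2^{N(n,q)}$, $a\mapsto c(a)=(tr(a\,\mathrm{Tr}\,g_1),\dots,tr(a\,\mathrm{Tr}\,g_{N(n,q)}))$, is injective, and hence gives an $\mathbb{F}_2$-linear isomorphism from $\mathbb{F}_q$ onto the dual code $C(DC(n,q))^{\perp}=\{c(a):a\in\mathbb{F}_q\}$. -/

import Mathlib

open scoped BigOperators Classical
open Matrix

noncomputable section

/-- The finite field `F_q` with `q = 2^r` elements. -/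
abbrev Fq (r : ℕ) : Type := GaloisField 2 r

noncomputable instance (r : ℕ) : Fintype (Fq r) := Fintype.ofFinite _

/-- The trace map `tr : F_q → F_2`. -/
noncomputable def tr2 (r : ℕ) (x : Fq r) : ZMod 2 := Algebra.trace (ZMod 2) (Fq r) x

/-- Index type for `(2n+1) × (2n+1)` matrices, split into blocks `n + (n + 1)`. -/
abbrev Idx (n : ℕ) := Fin n ⊕ (Fin n ⊕ Unit)

/-- The quadratic form `θ(x) = ∑_{i=1}^n x_i x_{n+i} + x_{2n+1}²`. -/
def theta (r n : ℕ) (x : Idx n → Fq r) : Fq r :=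
  (∑ i : Fin n, x (Sum.inl i) * x (Sum.inr (Sum.inl i))) + x (Sum.inr (Sum.inr ())) ^ 2

/-- Assemble a `(2n+1) × (2n+1)` matrix `[[A, B, e],[C, D, f],[g, h, c]]` from blocks. -/
def blk {α : Type} {n : ℕ} (A B C D : Matrix (Fin n) (Fin n) α)
    (g h e f : Fin n → α) (c : α) : Matrix (Idx n) (Idx n) α :=
  Matrix.of fun i j =>
    match i, j with
    | Sum.inl i, Sum.inl j => A i j
    | Sum.inl i, Sum.inr (Sum.inl j) => B i j
    | Sum.inl i, Sum.inr (Sum.inr _) => e i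
    | Sum.inr (Sum.inl i), Sum.inl j => C i j
    | Sum.inr (Sum.inl i), Sum.inr (Sum.inl j) => D i j
    | Sum.inr (Sum.inl i), Sum.inr (Sum.inr _) => f i
    | Sum.inr (Sum.inr _), Sum.inl j => g j
    | Sum.inr (Sum.inr _), Sum.inr (Sum.inl j) => h j
    | Sum.inr (Sum.inr _), Sum.inr (Sum.inr _) => c

/-- A square matrix is alternating: symmetric with zero diagonal (characteristic 2). -/
def IsAlt {n : ℕ} {α : Type} [Zero α] (M : Matrix (Fin n) (Fin n) α) : Prop :=
  Mᵀ = M ∧ ∀ i, M i i = 0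

/-- The orthogonal group `O(2n+1, q)`: isometries of the quadratic form `θ`. -/
def OGrp (r n : ℕ) : Set (Matrix (Idx n) (Idx n) (Fq r)) :=
  {w | IsUnit w ∧ ∀ x, theta r n (w.mulVec x) = theta r n x}

/-- The maximal parabolic subgroup `P(2n+1, q)`: all products
`[[A,0,0],[0,ᵗA⁻¹,0],[0,0,1]] * [[1,B,0],[0,1,0],[0,h,1]]` with `A ∈ GL(n,q)` and
`B + ᵗh h` alternating. -/
def Pgrp (r n : ℕ) : Set (Matrix (Idx n) (Idx n) (Fq r)) :=
  {w | ∃ A B h, IsUnit A ∧ IsAlt (B + Matrix.of (fun i j => h i * h j)) ∧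
    w = blk A 0 0 ((A⁻¹)ᵀ) 0 0 0 0 1 * blk 1 B 0 1 0 h 0 0 1}

/-- The matrix `σ_k ∈ O(2n+1, q)` interchanging the first `k` coordinates with
coordinates `n+1, …, n+k`. -/
def sigmaMat (r n k : ℕ) : Matrix (Idx n) (Idx n) (Fq r) :=
  blk (Matrix.of fun i j => if i = j ∧ k ≤ (i : ℕ) then 1 else 0)
      (Matrix.of fun i j => if i = j ∧ (i : ℕ) < k then 1 else 0)
      (Matrix.of fun i j => if i = j ∧ (i : ℕ) < k then 1 else 0)
      (Matrix.of fun i j => if i = j ∧ k ≤ (i : ℕ) then 1 else 0)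
      0 0 0 0 1

/-- The double coset `P σ_k P`. -/
def DCoset (r n k : ℕ) : Set (Matrix (Idx n) (Idx n) (Fq r)) :=
  {w | ∃ p ∈ Pgrp r n, ∃ p' ∈ Pgrp r n, w = p * sigmaMat r n k * p'}

/-- The double coset `P σ_k P` as a finite set. -/
noncomputable def PsPfin (r n k : ℕ) : Finset (Matrix (Idx n) (Idx n) (Fq r)) :=
  (Set.toFinite (DCoset r n k)).toFinset

/-- `DC(n, q) = P σ_{n-1} P`. -/
noncomputable def DCfin (r n : ℕ) : Finset (Matrix (Idx n) (Idx n) (Fq r)) :=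
  PsPfin r n (n - 1)

/-- The binary linear code `C(DC(n,q))`: all `u ∈ F_2^N` with `u · v(n,q) = 0`, the dot
product computed in `F_q` (viewing the coordinates of `u` in `F_2 ⊆ F_q`), where
`v(n,q) = (Tr g_1, …, Tr g_N)` for a fixed ordering `g` of `DC(n,q)`. -/
def codeSet (r n : ℕ) {N : ℕ} (g : Fin N → Matrix (Idx n) (Idx n) (Fq r)) :
    Set (Fin N → ZMod 2) :=
  {u | ∑ i, algebraMap (ZMod 2) (Fq r) (u i) * Matrix.trace (g i) = 0}

/-- The codeword `c(a) = (tr(a·Tr g_1), …, tr(a·Tr g_N))`. -/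
noncomputable def cword (r n : ℕ) {N : ℕ} (g : Fin N → Matrix (Idx n) (Idx n) (Fq r))
    (a : Fq r) : Fin N → ZMod 2 :=
  fun i => tr2 r (a * Matrix.trace (g i))

/-!
The traces of the elements of `DC(n,q)` span `𝔽_q` over `𝔽₂`. Granting this, `c` is injective
because the trace form is nondegenerate, and the dual of the kernel of `u ↦ ∑ uᵢ Tr gᵢ` is the
image of the transposed map, which the trace form identifies with `{c(a)}`.

For `n ≥ 2` every element `y² + 1` of `𝔽_q` is the trace of `p σ_{n-1}` for a unipotent `p ∈ P`.
For `n = 1` the traces include all `t + t⁻¹ + 1`. An `𝔽₂`-linear form `ℓ` killing these satisfies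
`ℓ(t⁻¹) = ℓ(t)`, hence, as `s⁻¹ + (s+1)⁻¹ = (s² + s)⁻¹`, `ℓ(v (s² + s)) = ℓ(v)`. The `q/2 - 1`
nonzero values of `s² + s` generate the odd-order group `𝔽_q^×` by counting unless `q = 4`,
so `ℓ` is constant on `𝔽_q^×`, equal to `ℓ(1) = 0`.
-/

section ArtinSchreier

variable (K : Type*) [Field K] [CharP K 2]

def artinSchreier : K →+ K where
  toFun x := x ^ 2 + x
  map_zero' := by simp
  map_add' x y := by rw [CharTwo.add_sq]; ring

variable {K}

lemma artinSchreier_apply (x : K) : artinSchreier K x = x ^ 2 + x := rfl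

lemma coe_ker_artinSchreier : ((artinSchreier K).ker : Set K) = {0, 1} := by
  ext x
  simp only [SetLike.mem_coe, AddMonoidHom.mem_ker, artinSchreier_apply, Set.mem_insert_iff,
    Set.mem_singleton_iff, sq, ← mul_add_one x, mul_eq_zero, CharTwo.add_eq_zero]

lemma two_mul_card_range_artinSchreier [Finite K] :
    2 * Nat.card (artinSchreier K).range = Nat.card K := by
  have hker : Nat.card (artinSchreier K).ker = 2 := by
    rw [← SetLike.coe_sort_coe, coe_ker_artinSchreier, Nat.card_coe_set_eq,
      Set.ncard_pair zero_ne_one]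
  rw [← AddSubgroup.index_ker, ← hker, AddSubgroup.card_mul_index]

theorem closure_artinSchreier_eq_top [Finite K] (hK : Nat.card K ≠ 4) :
    Subgroup.closure {u : Kˣ | (u : K) ∈ (artinSchreier K).range} = ⊤ := by
  set G := Subgroup.closure {u : Kˣ | (u : K) ∈ (artinSchreier K).range}
  set m := Nat.card (artinSchreier K).range
  have hm : 2 * m = Nat.card K := two_mul_card_range_artinSchreier
  have hG : m ≤ Nat.card G + 1 := by
    have hsub : ((artinSchreier K).range : Set K) ⊆ insert 0 (Units.val '' (G : Set Kˣ)) := by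
      intro x hx
      by_cases hx0 : x = 0
      · exact Or.inl hx0
      · exact Or.inr ⟨Units.mk0 x hx0, Subgroup.subset_closure hx, rfl⟩
    calc m = ((artinSchreier K).range : Set K).ncard := (Nat.card_coe_set_eq _)
      _ ≤ (insert 0 (Units.val '' (G : Set Kˣ))).ncard := Set.ncard_le_ncard hsub
      _ ≤ (Units.val '' (G : Set Kˣ)).ncard + 1 := Set.ncard_insert_le _ _
      _ = Nat.card G + 1 := by
        rw [Set.ncard_image_of_injective _ Units.val_injective, ← SetLike.coe_sort_coe,
          Nat.card_coe_set_eq]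
  have hm0 : 0 < m := Nat.card_pos
  have hGpos : 0 < Nat.card G := Nat.card_pos
  obtain ⟨k, hk⟩ := Subgroup.card_subgroup_dvd_card G
  rw [Nat.card_units] at hk
  -- `Nat.card Kˣ = 2m - 1` is odd, and an index `k ≥ 3` would force `m ≤ 2`, i.e. `|K| ≤ 4`.
  have hk1 : k = 1 := by
    rcases Nat.lt_or_ge k 3 with hk3 | hk3
    · interval_cases k <;> omega
    · have := Nat.mul_le_mul_left (Nat.card G) hk3
      omega
  rw [hk1, mul_one, ← Nat.card_units] at hk
  exact Subgroup.eq_top_of_card_eq G hk.symm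

lemma inv_mul_add_inv_mul_add_one {s : K} (v : K) (hs : s ^ 2 + s ≠ 0) :
    (s * v)⁻¹ + ((s + 1) * v)⁻¹ = (v * (s ^ 2 + s))⁻¹ := by
  have hs0 : s ≠ 0 := by rintro rfl; simp at hs
  have hs1 : s + 1 ≠ 0 := by rintro h; apply hs; linear_combination s * h
  rw [mul_inv, mul_inv, ← add_mul, inv_add_inv hs0 hs1, CharTwo.add_cancel_left, one_div,
    mul_comm, sq, ← mul_add_one, mul_inv v]

theorem AddMonoidHom.eq_zero_of_map_add_inv_add_one [Finite K] (hK : Nat.card K ≠ 4)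
    (ℓ : K →+ ZMod 2) (hℓ : ∀ t : K, t ≠ 0 → ℓ (t + t⁻¹ + 1) = 0) : ℓ = 0 := by
  have h1 : ℓ 1 = 0 := by
    simpa [CharTwo.add_self_eq_zero] using hℓ 1 one_ne_zero
  have hinv (t : K) : ℓ t⁻¹ = ℓ t := by
    rcases eq_or_ne t 0 with rfl | ht
    · simp
    · have := hℓ t ht
      rw [map_add, map_add, h1, add_zero, CharTwo.add_eq_zero] at this
      exact this.symm
  have hmul (v : K) (u : K) (hu : u ∈ (artinSchreier K).range) (hu0 : u ≠ 0) :
      ℓ (v * u) = ℓ v := by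
    obtain ⟨s, rfl⟩ := hu
    rw [artinSchreier_apply] at hu0 ⊢
    calc ℓ (v * (s ^ 2 + s)) = ℓ (v * (s ^ 2 + s))⁻¹ := (hinv _).symm
      _ = ℓ (s * v)⁻¹ + ℓ ((s + 1) * v)⁻¹ := by
        rw [← map_add, inv_mul_add_inv_mul_add_one v hu0]
      _ = ℓ v := by
        rw [hinv, hinv, ← map_add]
        congr 1
        linear_combination v * CharTwo.add_self_eq_zero s
  let S : Subgroup Kˣ :=
    { carrier := {u | ∀ v, ℓ (v * u) = ℓ v}
      mul_mem' := fun {a b} ha hb v => by rw [Units.val_mul, ← mul_assoc, hb, ha]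
      one_mem' := fun v => by rw [Units.val_one, mul_one]
      inv_mem' := fun {a} ha v => by
        rw [← ha (v * ↑a⁻¹), mul_assoc, Units.inv_mul, mul_one] }
  have hS : S = ⊤ := by
    refine top_unique ((closure_artinSchreier_eq_top hK).symm.le.trans ?_)
    exact (Subgroup.closure_le _).2 fun u hu v => hmul v u hu u.ne_zero
  ext x
  rcases eq_or_ne x 0 with rfl | hx
  · simp
  · have : Units.mk0 x hx ∈ S := hS ▸ Subgroup.mem_top _
    simpa [h1] using this 1

theorem span_add_inv_add_one_eq_top [Finite K] [Module (ZMod 2) K] (hK : Nat.card K ≠ 4) :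
    Submodule.span (ZMod 2) ((fun t : K => t + t⁻¹ + 1) '' {0}ᶜ) = ⊤ := by
  by_contra hspan
  obtain ⟨f, hf0, hle⟩ := Submodule.exists_le_ker_of_lt_top _ (lt_top_iff_ne_top.2 hspan)
  refine hf0 (LinearMap.toAddMonoidHom_injective
    (f.toAddMonoidHom.eq_zero_of_map_add_inv_add_one hK fun t ht => ?_))
  exact hle (Submodule.subset_span ⟨t, ht, rfl⟩)

end ArtinSchreier

section DoubleCoset

variable {r n : ℕ}

lemma blk_one {α : Type} [Zero α] [One α] :
    blk (1 : Matrix (Fin n) (Fin n) α) 0 0 1 0 0 0 0 1 = 1 := by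
  ext (i | i | _) (j | j | _) <;> simp [blk, Matrix.one_apply]

lemma trace_blk {α : Type} [AddCommMonoid α] (A B C D : Matrix (Fin n) (Fin n) α)
    (g h e f : Fin n → α) (c : α) :
    trace (blk A B C D g h e f c) = trace A + trace D + c := by
  simp [Matrix.trace, blk, Fintype.sum_sum_type, add_assoc]

lemma sigmaMat_zero : sigmaMat r n 0 = 1 := by
  ext (i | i | _) (j | j | _) <;> simp [sigmaMat, blk, Matrix.one_apply]

lemma trace_unipotent_mul_sigmaMat (B : Matrix (Fin n) (Fin n) (Fq r)) (h : Fin n → Fq r)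
    (k : ℕ) : trace (blk 1 B 0 1 0 h 0 0 1 * sigmaMat r n k) =
      ∑ i ∈ Finset.univ.filter (fun i : Fin n => (i : ℕ) < k), B i i + 1 := by
  simp [Matrix.trace, Matrix.mul_apply, sigmaMat, blk, Fintype.sum_sum_type, Matrix.one_apply,
    ite_and, Finset.sum_add_distrib, Finset.sum_boole, Finset.sum_filter]
  linear_combination
    CharTwo.add_self_eq_zero ((Finset.univ.filter fun i : Fin n => k ≤ (i : ℕ)).card : Fq r)

lemma levi_mem_Pgrp {A : Matrix (Fin n) (Fin n) (Fq r)} (hA : IsUnit A) :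
    blk A 0 0 A⁻¹ᵀ 0 0 0 0 1 ∈ Pgrp r n :=
  ⟨A, 0, 0, hA, ⟨by ext; simp, by simp⟩, by simp [blk_one]⟩

lemma one_mem_Pgrp : (1 : Matrix (Idx n) (Idx n) (Fq r)) ∈ Pgrp r n := by
  simpa [blk_one] using levi_mem_Pgrp (r := r) (n := n) isUnit_one

lemma unipotent_mem_Pgrp (h : Fin n → Fq r) :
    blk 1 (diagonal fun i => h i ^ 2) 0 1 0 h 0 0 1 ∈ Pgrp r n := by
  refine ⟨1, diagonal fun i => h i ^ 2, h, isUnit_one, ⟨?_, fun i => ?_⟩, by simp [blk_one]⟩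
  · ext i j
    by_cases hij : i = j
    · simp [hij]
    · simp [hij, Ne.symm hij, mul_comm]
  · simp [sq, CharTwo.add_self_eq_zero]

lemma mul_sigmaMat_mem_DCfin {p : Matrix (Idx n) (Idx n) (Fq r)} (hp : p ∈ Pgrp r n) :
    p * sigmaMat r n (n - 1) ∈ DCfin r n :=
  (Set.Finite.mem_toFinset _).2 ⟨p, hp, 1, one_mem_Pgrp, (mul_one _).symm⟩

lemma add_inv_add_one_mem_trace_DCfin {t : Fq r} (ht : t ≠ 0) :
    t + t⁻¹ + 1 ∈ trace '' (DCfin r 1 : Set (Matrix (Idx 1) (Idx 1) (Fq r))) := by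
  set A : Matrix (Fin 1) (Fin 1) (Fq r) := diagonal fun _ => t
  have hA : IsUnit A := by simpa [A, Matrix.isUnit_diagonal, Pi.isUnit_iff] using ht
  refine ⟨_, mul_sigmaMat_mem_DCfin (levi_mem_Pgrp hA), ?_⟩
  rw [Nat.sub_self, sigmaMat_zero, mul_one, trace_blk]
  simp [A]

lemma trace_DCfin_eq_univ (hn : 2 ≤ n) :
    trace '' (DCfin r n : Set (Matrix (Idx n) (Idx n) (Fq r))) = Set.univ := by
  refine Set.eq_univ_of_forall fun x => ?_
  obtain ⟨y, hy⟩ := isSquare_of_charTwo' (x + 1)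
  let i₀ : Fin n := ⟨0, by omega⟩
  refine ⟨_, mul_sigmaMat_mem_DCfin (unipotent_mem_Pgrp (Pi.single i₀ y)), ?_⟩
  rw [trace_unipotent_mul_sigmaMat]
  simp only [diagonal_apply_eq, Pi.single_apply]
  rw [Finset.sum_eq_single_of_mem i₀ (by simp [i₀]; omega) fun i _ hi => by simp [hi],
    if_pos rfl, sq, ← hy, CharTwo.add_cancel_right]

theorem span_trace_DCfin_eq_top (hr : 1 ≤ r) (hn : 1 ≤ n)
    (hexc : ¬(n = 1 ∧ 2 ^ r = 4)) :
    Submodule.span (ZMod 2) (trace '' (DCfin r n : Set (Matrix (Idx n) (Idx n) (Fq r)))) = ⊤ := by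
  rcases hn.eq_or_lt with rfl | hn2
  · have hK : Nat.card (Fq r) ≠ 4 := by
      rw [GaloisField.card 2 r (by omega)]
      exact fun h => hexc ⟨rfl, h⟩
    refine top_unique ((span_add_inv_add_one_eq_top hK).symm.le.trans (Submodule.span_mono ?_))
    rintro _ ⟨t, ht, rfl⟩
    exact add_inv_add_one_mem_trace_DCfin ht
  · rw [trace_DCfin_eq_univ hn2, Submodule.span_univ]

end DoubleCoset

section TraceCode

variable {F K ι : Type*} [Field F] [Field K] [Algebra F K] [FiniteDimensional F K]
  [Algebra.IsSeparable F K] (v : ι → K)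

theorem injective_trace_mul_of_span_eq_top (hv : Submodule.span F (Set.range v) = ⊤) :
    Function.Injective fun (a : K) (i : ι) => Algebra.trace F K (a * v i) := by
  intro a b hab
  rw [← sub_eq_zero]
  refine (traceForm_nondegenerate F K).1 _ fun x => ?_
  have hker : Submodule.span F (Set.range v) ≤ LinearMap.ker (Algebra.traceForm F K (a - b)) := by
    refine Submodule.span_le.2 ?_
    rintro _ ⟨i, rfl⟩
    simp [congrFun hab i]
  exact hker (hv ▸ Submodule.mem_top)

theorem setOf_dotProduct_eq_zero_eq_range_trace_mul [Fintype ι] :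
    {w : ι → F | ∀ u ∈ LinearMap.ker (Fintype.linearCombination F v), u ⬝ᵥ w = 0} =
      Set.range fun (a : K) (i : ι) => Algebra.trace F K (a * v i) := by
  ext w
  constructor
  · intro hw
    have hdual : Fintype.linearCombination F w ∈
        LinearMap.range (Fintype.linearCombination F v).dualMap := by
      rw [LinearMap.range_dualMap_eq_dualAnnihilator_ker, Submodule.mem_dualAnnihilator]
      intro u hu
      simpa [Fintype.linearCombination_apply, dotProduct] using hw u hu
    obtain ⟨f, hf⟩ := hdual
    refine ⟨((Algebra.traceForm F K).toDual (traceForm_nondegenerate F K)).symm f,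
      funext fun i => ?_⟩
    have hfi : f (v i) = w i := by simpa using LinearMap.congr_fun hf (Pi.single i 1)
    rw [← hfi]
    exact LinearMap.BilinForm.apply_toDual_symm_apply (B := Algebra.traceForm F K) f (v i)
  · rintro ⟨a, rfl⟩ u hu
    calc u ⬝ᵥ (fun i => Algebra.trace F K (a * v i))
        = Algebra.trace F K (a * Fintype.linearCombination F v u) := by
          simp [dotProduct, Fintype.linearCombination_apply, Finset.mul_sum]
      _ = 0 := by rw [LinearMap.mem_ker.1 hu, mul_zero, map_zero]

end TraceCode

lemma range_eq_of_injective_of_forall_mem {α : Type*} {s : Finset α} {g : Fin s.card → α}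
    (hinj : Function.Injective g) (hmem : ∀ i, g i ∈ s) : Set.range g = s := by
  have himage : Finset.univ.image g = s :=
    Finset.eq_of_subset_of_card_le (Finset.image_subset_iff.2 fun i _ => hmem i)
      (by rw [Finset.card_image_of_injective _ hinj, Finset.card_univ, Fintype.card_fin])
  simpa using congrArg ((↑) : Finset α → Set α) himage

theorem stmt_5_general (r n : ℕ) (hr : 1 ≤ r) (hn : 1 ≤ n)
    (hexc : ¬(n = 1 ∧ (2 : ℕ) ^ r = 4))
    (g : Fin (DCfin r n).card → Matrix (Idx n) (Idx n) (Fq r))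
    (hginj : Function.Injective g) (hgmem : ∀ i, g i ∈ DCfin r n) :
    Function.Injective (cword r n g) ∧
    {v : Fin (DCfin r n).card → ZMod 2 |
        ∀ u ∈ codeSet r n g, ∑ i, u i * v i = 0} = Set.range (cword r n g) := by
  have hspan : Submodule.span (ZMod 2) (Set.range fun i => trace (g i)) = ⊤ := by
    rw [Set.range_comp', range_eq_of_injective_of_forall_mem hginj hgmem]
    exact span_trace_DCfin_eq_top hr hn hexc
  refine ⟨injective_trace_mul_of_span_eq_top _ hspan, ?_⟩
  convert setOf_dotProduct_eq_zero_eq_range_trace_mul (F := ZMod 2) (fun i => trace (g i)) using 1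
  · ext w
    simp only [codeSet, Set.mem_ofPred_eq, LinearMap.mem_ker, Fintype.linearCombination_apply,
      Algebra.smul_def, dotProduct]
  · rfl

/-- For `q = 2^r`, odd `n ≥ 1` with `(n, q) ≠ (1, 4)`: the `F_2`-linear map
`a ↦ c(a) = (tr(a Tr g_1), …, tr(a Tr g_N))` is injective, and gives an
isomorphism from `F_q` onto the dual code `C(DC(n,q))^⊥ = {c(a) : a ∈ F_q}`. -/
theorem stmt_5 (r n : ℕ) (hr : 1 ≤ r) (hn : 1 ≤ n) (hodd : Odd n)
    (hexc : ¬(n = 1 ∧ (2 : ℕ) ^ r = 4))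
    (g : Fin (DCfin r n).card → Matrix (Idx n) (Idx n) (Fq r))
    (hginj : Function.Injective g) (hgmem : ∀ i, g i ∈ DCfin r n) :
    Function.Injective (cword r n g) ∧
    {v : Fin (DCfin r n).card → ZMod 2 |
        ∀ u ∈ codeSet r n g, ∑ i, u i * v i = 0} = Set.range (cword r n g) :=
  stmt_5_general r n hr hn hexc g hginj hgmem
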